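/- Let F be a real quadratic field, C ≥ 1, let I be a fractional ideal of F satisfying condition (⋆), and let {b₁, b₂} be an LLL-reduced basis of the lattice I with ‖b₁‖ equal to the length of the shortest nonzero vector of I. If g = s₁·b₁ + b₂ ∈ G′ with s₁ ∈ ℤ, then either |s₁| ≤ 2, or s₁ is one of at most two consecutive integers lying strictly between (−1/C − b_{2j})/b_{1j} and (1/C − b_{2j})/b_{1j} for the index j ∈ {1,2} with |b_{1j}| > 1/C; in all cases |s₁| < 1 + 2C. -/

import Mathlib

open NumberField
open scoped nonZeroDivisors

noncomputable section

/-- Euclidean length of the image of `g ∈ F` in `ℝ²` under the two real embeddings. -/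
def qnorm {F : Type*} [Field F] (σ₁ σ₂ : F →+* ℝ) (g : F) : ℝ :=
  Real.sqrt ((σ₁ g) ^ 2 + (σ₂ g) ^ 2)

/-- `‖g‖_u` for a metric `u = (u₁, u₂)` : `‖g‖_u² = u₁²g₁² + u₂²g₂²`.
In particular `‖1‖_u = ‖u‖`. -/
def qnormu {F : Type*} [Field F] (σ₁ σ₂ : F →+* ℝ) (u₁ u₂ : ℝ) (g : F) : ℝ :=
  Real.sqrt (u₁ ^ 2 * (σ₁ g) ^ 2 + u₂ ^ 2 * (σ₂ g) ^ 2)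

/-- The covolume of the lattice attached to a fractional ideal `I` of a real quadratic
field : `covol(I) = √Δ_F · N(I)`. -/
def qcovol (F : Type*) [Field F] [NumberField F] (I : FractionalIdeal (𝓞 F)⁰ F) : ℝ :=
  Real.sqrt (NumberField.discr F : ℝ) * (FractionalIdeal.absNorm I : ℝ)

/-- `1` is primitive in `I` : `1 ∈ I` and there is no integer `d ≥ 2` with `1/d ∈ I`. -/
def primitiveOne (F : Type*) [Field F] [NumberField F]
    (I : FractionalIdeal (𝓞 F)⁰ F) : Prop :=
  (1 : F) ∈ I ∧ ∀ d : ℤ, 2 ≤ d → (1 : F) / (d : F) ∉ I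

/-- `g` (viewed in `ℝ²`) lies in the square
`S₁ = {(x₁,x₂) : |x₁| ≤ 1/C, |x₂| ≤ 1/C, x₁² + x₂² < 2/C²}`. -/
def inS1 {F : Type*} [Field F] (σ₁ σ₂ : F →+* ℝ) (C : ℝ) (g : F) : Prop :=
  |σ₁ g| ≤ 1 / C ∧ |σ₂ g| ≤ 1 / C ∧ (σ₁ g) ^ 2 + (σ₂ g) ^ 2 < 2 / C ^ 2

/-- Condition `(⋆)` : (1) `1` is primitive in `I`; (2) `I` has no nonzero element in `S₁`;
(3) the shortest nonzero vector `f` of `I` satisfies `1/C < ‖f‖ < √2/C`. -/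
def starCond (F : Type*) [Field F] [NumberField F] (σ₁ σ₂ : F →+* ℝ) (C : ℝ)
    (I : FractionalIdeal (𝓞 F)⁰ F) : Prop :=
  primitiveOne F I ∧
  (∀ g : F, g ∈ I → g ≠ 0 → ¬ inS1 σ₁ σ₂ C g) ∧
  (∃ f : F, f ∈ I ∧ f ≠ 0 ∧ (∀ g : F, g ∈ I → g ≠ 0 → qnorm σ₁ σ₂ f ≤ qnorm σ₁ σ₂ g) ∧
     1 / C < qnorm σ₁ σ₂ f ∧ qnorm σ₁ σ₂ f < Real.sqrt 2 / C)

/-- The set `G = {g ∈ I, g ≠ 0 : (g₁² − 1/C²)(g₂² − 1/C²) < 0, ‖g‖ < (4/π)·C·covol(I)}`. -/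
def inG (F : Type*) [Field F] [NumberField F] (σ₁ σ₂ : F →+* ℝ) (C : ℝ)
    (I : FractionalIdeal (𝓞 F)⁰ F) (g : F) : Prop :=
  g ∈ I ∧ g ≠ 0 ∧ ((σ₁ g) ^ 2 - 1 / C ^ 2) * ((σ₂ g) ^ 2 - 1 / C ^ 2) < 0 ∧
    qnorm σ₁ σ₂ g < (4 / Real.pi) * C * qcovol F I

/-- `I` is `C`-reduced : `1` is primitive in `I` and there is a metric `u ∈ (ℝ_{>0})²` such
that `‖1‖_u ≤ C·‖g‖_u` for all nonzero `g ∈ I`. -/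
def isCReduced (F : Type*) [Field F] [NumberField F] (σ₁ σ₂ : F →+* ℝ) (C : ℝ)
    (I : FractionalIdeal (𝓞 F)⁰ F) : Prop :=
  primitiveOne F I ∧
    ∃ u₁ u₂ : ℝ, 0 < u₁ ∧ 0 < u₂ ∧ ∀ g : F, g ∈ I → g ≠ 0 →
      qnormu σ₁ σ₂ u₁ u₂ 1 ≤ C * qnormu σ₁ σ₂ u₁ u₂ g

/-- `G₁ = {g ∈ G : g₁² < 1/C²}`. -/
def setG1 (F : Type*) [Field F] [NumberField F] (σ₁ σ₂ : F →+* ℝ) (C : ℝ)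
    (I : FractionalIdeal (𝓞 F)⁰ F) : Set F :=
  {g : F | inG F σ₁ σ₂ C I g ∧ (σ₁ g) ^ 2 < 1 / C ^ 2}

/-- `G₂ = {g ∈ G : g₂² < 1/C²}`. -/
def setG2 (F : Type*) [Field F] [NumberField F] (σ₁ σ₂ : F →+* ℝ) (C : ℝ)
    (I : FractionalIdeal (𝓞 F)⁰ F) : Set F :=
  {g : F | inG F σ₁ σ₂ C I g ∧ (σ₂ g) ^ 2 < 1 / C ^ 2}

/-- `B(g) = (−(C²g₁² − 1)/(C²g₂² − 1))^{1/4}`. -/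
def Bfun {F : Type*} [Field F] (σ₁ σ₂ : F →+* ℝ) (C : ℝ) (g : F) : ℝ :=
  (-(C ^ 2 * (σ₁ g) ^ 2 - 1) / (C ^ 2 * (σ₂ g) ^ 2 - 1)) ^ ((1 : ℝ) / 4)

open scoped Classical in
/-- `B_min = max{B(g) : g ∈ G₁}` if `G₁ ≠ ∅`, and `1/(2√C)` otherwise
(`G₁` being finite, its supremum is its maximum). -/
def Bmin (F : Type*) [Field F] [NumberField F] (σ₁ σ₂ : F →+* ℝ) (C : ℝ)
    (I : FractionalIdeal (𝓞 F)⁰ F) : ℝ :=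
  if (setG1 F σ₁ σ₂ C I).Nonempty then sSup (Bfun σ₁ σ₂ C '' setG1 F σ₁ σ₂ C I)
  else 1 / (2 * Real.sqrt C)

open scoped Classical in
/-- `B_max = min{B(g) : g ∈ G₂}` if `G₂ ≠ ∅`, and `2√C` otherwise. -/
def Bmax (F : Type*) [Field F] [NumberField F] (σ₁ σ₂ : F →+* ℝ) (C : ℝ)
    (I : FractionalIdeal (𝓞 F)⁰ F) : ℝ :=
  if (setG2 F σ₁ σ₂ C I).Nonempty then sInf (Bfun σ₁ σ₂ C '' setG2 F σ₁ σ₂ C I)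
  else 2 * Real.sqrt C

/-- `G′ = {g ∈ G : B(g) = B_max or B(g) = B_min}`. -/
def inG' (F : Type*) [Field F] [NumberField F] (σ₁ σ₂ : F →+* ℝ) (C : ℝ)
    (I : FractionalIdeal (𝓞 F)⁰ F) (g : F) : Prop :=
  inG F σ₁ σ₂ C I g ∧
    (Bfun σ₁ σ₂ C g = Bmax F σ₁ σ₂ C I ∨ Bfun σ₁ σ₂ C g = Bmin F σ₁ σ₂ C I)

/-- `{b₁, b₂}` is an LLL-reduced basis of the lattice `I ⊆ ℝ²`. -/
def isLLLBasis (F : Type*) [Field F] [NumberField F] (σ₁ σ₂ : F →+* ℝ)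
    (I : FractionalIdeal (𝓞 F)⁰ F) (b₁ b₂ : F) : Prop :=
  b₁ ∈ I ∧ b₂ ∈ I ∧
  (∀ g : F, g ∈ I → ∃ s t : ℤ, g = s • b₁ + t • b₂) ∧
  (∀ s t : ℤ, (s • b₁ + t • b₂ : F) = 0 → s = 0 ∧ t = 0) ∧
  |(σ₁ b₂ * σ₁ b₁ + σ₂ b₂ * σ₂ b₁) / ((σ₁ b₁) ^ 2 + (σ₂ b₁) ^ 2)| ≤ 1 / 2 ∧
  ((σ₁ b₂ - (σ₁ b₂ * σ₁ b₁ + σ₂ b₂ * σ₂ b₁) / ((σ₁ b₁) ^ 2 + (σ₂ b₁) ^ 2) * σ₁ b₁) ^ 2 +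
   (σ₂ b₂ - (σ₁ b₂ * σ₁ b₁ + σ₂ b₂ * σ₂ b₁) / ((σ₁ b₁) ^ 2 + (σ₂ b₁) ^ 2) * σ₂ b₁) ^ 2 ≥
    (3 / 4 - ((σ₁ b₂ * σ₁ b₁ + σ₂ b₂ * σ₂ b₁) / ((σ₁ b₁) ^ 2 + (σ₂ b₁) ^ 2)) ^ 2) *
      ((σ₁ b₁) ^ 2 + (σ₂ b₁) ^ 2))


section AuxLemmas

open NumberField Module
open scoped nonZeroDivisors



/-- norm-squared identity in orthogonalized coordinates -/
lemma aux_normsq (a1 a2 c1 c2 x y : ℝ) (hL : a1^2 + a2^2 ≠ 0) :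
    (x*a1 + y*c1)^2 + (x*a2 + y*c2)^2
      = (x + y*((c1*a1 + c2*a2)/(a1^2+a2^2)))^2 * (a1^2+a2^2)
        + y^2 * ((c1^2+c2^2) - (c1*a1+c2*a2)^2/(a1^2+a2^2)) := by
  field_simp
  ring

/-- second minimum inequality -/
lemma aux_secmin (L2 Bsq mu : ℝ) (p q : ℤ) (hL2 : 0 < L2) (hmu : |mu| ≤ 1/2)
    (hB : (3/4 - mu^2) * L2 ≤ Bsq) (hq : q ≠ 0) :
    mu^2*L2 + Bsq ≤ ((p:ℝ) + (q:ℝ)*mu)^2*L2 + (q:ℝ)^2*Bsq := by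
  obtain ⟨hmu1, hmu2⟩ := abs_le.mp hmu
  have hB0 : 0 ≤ Bsq := le_trans (mul_nonneg (by nlinarith) hL2.le) hB
  rcases lt_or_ge |q| 2 with hq2 | hq2
  · have hqb : -2 < q ∧ q < 2 := ⟨by linarith [neg_abs_le q], by linarith [le_abs_self q]⟩
    have hq1 : q = 1 ∨ q = -1 := by omega
    have hqsq : (q:ℝ)^2 = 1 := by rcases hq1 with rfl | rfl <;> norm_num
    rcases eq_or_ne p 0 with rfl | hp
    · rcases hq1 with rfl | rfl <;> simp <;> nlinarith
    · have hp1 : (1:ℝ) ≤ |(p:ℝ)| := by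
        rw [← Int.cast_abs]
        exact_mod_cast Int.one_le_abs hp
      have hkey : mu^2 ≤ ((p:ℝ) + (q:ℝ)*mu)^2 := by
        rcases le_or_gt 1 (p:ℝ) with hp' | hp'
        · rcases hq1 with rfl | rfl <;> push_cast <;> nlinarith
        · have hp'' : (p:ℝ) ≤ -1 := by
            rcases abs_cases (p:ℝ) with ⟨h1, h2⟩ | ⟨h1, h2⟩ <;> linarith [h1 ▸ hp1]
          rcases hq1 with rfl | rfl <;> push_cast <;> nlinarith
      nlinarith
  · have hq4 : (4:ℝ) ≤ (q:ℝ)^2 := by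
      have : (2:ℝ) ≤ |(q:ℝ)| := by
        rw [← Int.cast_abs]; exact_mod_cast hq2
      nlinarith [sq_abs (q:ℝ), mul_le_mul this this (by norm_num : (0:ℝ) ≤ 2) (abs_nonneg (q:ℝ))]
    have h3 : mu^2*L2 ≤ 3*Bsq := by
      nlinarith [mul_nonneg (by nlinarith : (0:ℝ) ≤ 9/4 - 4*mu^2) hL2.le]
    have h4 : 4*Bsq ≤ (q:ℝ)^2*Bsq := by nlinarith [mul_nonneg (by linarith : (0:ℝ) ≤ (q:ℝ)^2 - 4) hB0]
    nlinarith [mul_nonneg (sq_nonneg ((p:ℝ) + (q:ℝ)*mu)) hL2.le]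

/-- quartic root comparisons -/
lemma aux_quart_le {x y : ℝ} (_hx : 0 ≤ x) (hy : 0 ≤ y)
    (h : x ^ ((1:ℝ)/4) ≤ y ^ ((1:ℝ)/4)) : x ≤ y := by
  by_contra h'
  push_neg at h'
  exact absurd h (not_le.mpr (Real.rpow_lt_rpow hy h' (by norm_num)))

lemma aux_quart_lt {x y : ℝ} (_hx : 0 ≤ x) (hy : 0 ≤ y)
    (h : x ^ ((1:ℝ)/4) < y ^ ((1:ℝ)/4)) : x < y := by
  by_contra h'
  push_neg at h'
  exact absurd h (not_lt.mpr (Real.rpow_le_rpow hy h' (by norm_num)))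


lemma aux_abs_le_of_sq (C x : ℝ) (hC : 0 < C) (h : x^2 ≤ 1/C^2) : |x| ≤ 1/C := by
  rw [← Real.sqrt_sq_eq_abs,
    show (1/C) = Real.sqrt (1/C^2) from by
      rw [show (1:ℝ)/C^2 = (1/C)^2 from by rw [div_pow, one_pow], Real.sqrt_sq (by positivity)]]
  exact Real.sqrt_le_sqrt h

lemma aux_lt_abs_of_sq (C x : ℝ) (hC : 0 < C) (h : 1/C^2 < x^2) : 1/C < |x| := by
  rw [← Real.sqrt_sq_eq_abs,
    show (1/C) = Real.sqrt (1/C^2) from by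
      rw [show (1:ℝ)/C^2 = (1/C)^2 from by rw [div_pow, one_pow], Real.sqrt_sq (by positivity)]]
  exact Real.sqrt_lt_sqrt (by positivity) h

lemma aux_abs_lt_of_sq (C x : ℝ) (hC : 0 < C) (h : x^2 < 1/C^2) : |x| < 1/C := by
  rw [← Real.sqrt_sq_eq_abs,
    show (1/C) = Real.sqrt (1/C^2) from by
      rw [show (1:ℝ)/C^2 = (1/C)^2 from by rw [div_pow, one_pow], Real.sqrt_sq (by positivity)]]
  exact Real.sqrt_lt_sqrt (sq_nonneg x) h

lemma aux_one_lt_mul (C x : ℝ) (hC : 0 < C) (h : 1/C^2 < x) : 1 < C^2*x := by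
  have h2 : (0:ℝ) < C^2 := by positivity
  calc (1:ℝ) = C^2*(1/C^2) := by field_simp
  _ < C^2*x := mul_lt_mul_of_pos_left h h2

lemma aux_mul_lt_one (C x : ℝ) (hC : 0 < C) (h : x < 1/C^2) : C^2*x < 1 := by
  have h2 : (0:ℝ) < C^2 := by positivity
  calc C^2*x < C^2*(1/C^2) := mul_lt_mul_of_pos_left h h2
  _ = 1 := by field_simp

lemma aux_one_le_sqrt (C : ℝ) (hC : 1 ≤ C) : 1 ≤ Real.sqrt C := by
  rw [show (1:ℝ) = Real.sqrt 1 from Real.sqrt_one.symm]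
  exact Real.sqrt_le_sqrt hC

lemma aux_caseA_minmax (C s a1 c1 : ℝ) (ha : a1 ≠ 0) (hlo : -(1/C) < s*a1+c1)
    (hhi : s*a1+c1 < 1/C) :
    min ((-(1/C) - c1)/a1) ((1/C - c1)/a1) < s ∧
      s < max ((-(1/C) - c1)/a1) ((1/C - c1)/a1) := by
  rcases lt_or_gt_of_ne ha with hneg | hpos
  · constructor
    · apply min_lt_iff.mpr; right; rw [div_lt_iff_of_neg hneg]; linarith
    · apply lt_max_iff.mpr; left; rw [lt_div_iff_of_neg hneg]; linarith
  · constructor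
    · apply min_lt_iff.mpr; left; rw [div_lt_iff₀ hpos]; linarith
    · apply lt_max_iff.mpr; right; rw [lt_div_iff₀ hpos]; linarith

lemma aux_caseA_bound (C s a1 c1 : ℝ) (hC : 1 ≤ C) (ha : 1/C^2 < a1^2) (hc : c1^2 ≤ 2)
    (hg : (s*a1+c1)^2 < 1/C^2) (hs : 1+2*C ≤ |s|) : False := by
  have hC0 : (0:ℝ) < C := by linarith
  have hs2 : (1+2*C)^2 ≤ s^2 := by nlinarith [abs_nonneg s, sq_abs s]
  have hP : (1+2*C)^2 * (1/C^2) ≤ s^2*a1^2 :=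
    mul_le_mul hs2 ha.le (by positivity) (sq_nonneg s)
  have hcc : C^2*(1/C^2) = 1 := by field_simp
  have htpos : 0 < 1/C^2 := by positivity
  nlinarith [sq_nonneg (s*a1 + 2*c1), mul_pos hC0 hC0,
    mul_pos htpos hC0, mul_le_mul_of_nonneg_right hC htpos.le]

lemma aux_caseB_s (s mu : ℝ) (hmu : |mu| ≤ 1/2) (h : (s+mu)^2 < 25/4) : |s| < 3 := by
  obtain ⟨h1, h2⟩ := abs_le.mp hmu
  apply abs_lt.mpr
  constructor <;> nlinarith [sq_nonneg (s+mu)]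

lemma aux_caseB_six (C s mu L2 Bsq G1 G2 : ℝ) (hC0 : 0 < C) (hL2lo : 1/C^2 < L2)
    (hid : G1^2+G2^2 = (s+mu)^2*L2 + Bsq) (hB0 : 0 ≤ Bsq)
    (h6 : C^2*(G1^2+G2^2) ≤ 6) : (s+mu)^2 < 25/4 := by
  by_contra hcon
  push_neg at hcon
  have h1 : (25/4) * (1/C^2) ≤ (s+mu)^2*L2 :=
    mul_le_mul hcon hL2lo.le (by positivity) (by nlinarith [sq_nonneg (s+mu)])
  have hcc : C^2*(1/C^2) = 1 := by field_simp
  nlinarith [mul_pos hC0 hC0]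

lemma aux_caseB_cov (C s mu L2 Bsq G1 G2 : ℝ) (hC : 1 ≤ C) (hL2pos : 0 < L2)
    (hid : G1^2+G2^2 = (s+mu)^2*L2 + Bsq) (hB0 : 0 ≤ Bsq)
    (hlt : G1^2+G2^2 < 16/Real.pi^2*C^2*(L2*Bsq)) (hBhi : C^2*Bsq < 9/4) :
    (s+mu)^2 < 25/4 := by
  have hπ := Real.pi_gt_three
  have hππ : (0:ℝ) < Real.pi^2 := by positivity
  have h1 : 16/Real.pi^2*C^2*(L2*Bsq) ≤ 36/Real.pi^2 * L2 := by
    rw [div_mul_eq_mul_div, div_mul_eq_mul_div, div_mul_eq_mul_div, div_le_div_iff₀ hππ hππ]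
    nlinarith [mul_le_mul_of_nonneg_left hBhi.le hL2pos.le, hππ]
  have h2 : 36/Real.pi^2*L2 < 4*L2 := by
    rw [div_mul_eq_mul_div, div_lt_iff₀ hππ]
    nlinarith [mul_pos hL2pos (show (0:ℝ) < Real.pi^2-9 by nlinarith)]
  have h3 : (s+mu)^2*L2 < 4*L2 := by linarith
  by_contra hcon
  push_neg at hcon
  nlinarith [mul_le_mul_of_nonneg_right hcon hL2pos.le]

lemma aux_ratio6_k2 (C G1 G2 : ℝ) (hden : C^2*G2^2 < 1)
    (hr : (C^2*G1^2-1)/(1-C^2*G2^2) ≤ 4) : C^2*(G1^2+G2^2) ≤ 6 := by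
  have hd : 0 < 1-C^2*G2^2 := by linarith
  rw [div_le_iff₀ hd] at hr
  nlinarith

lemma aux_ratio6_k1 (C G1 G2 : ℝ) (hnum : C^2*G1^2 < 1) (hden : 1 < C^2*G2^2)
    (hr : 1/4 ≤ (1-C^2*G1^2)/(C^2*G2^2-1)) : C^2*(G1^2+G2^2) ≤ 6 := by
  have hd : 0 < C^2*G2^2-1 := by linarith
  rw [le_div_iff₀ hd] at hr
  nlinarith

lemma aux_Bfun_k2 {F : Type*} [Field F] (σ₁ σ₂ : F →+* ℝ) (C : ℝ) (g : F) :
    Bfun σ₁ σ₂ C g = ((C^2*(σ₁ g)^2 - 1)/(1 - C^2*(σ₂ g)^2)) ^ ((1:ℝ)/4) := by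
  unfold Bfun
  rw [show (1 - C^2*(σ₂ g)^2) = -(C^2*(σ₂ g)^2 - 1) from by ring, div_neg, neg_div]

lemma aux_Bfun_k1 {F : Type*} [Field F] (σ₁ σ₂ : F →+* ℝ) (C : ℝ) (g : F) :
    Bfun σ₁ σ₂ C g = ((1 - C^2*(σ₁ g)^2)/(C^2*(σ₂ g)^2 - 1)) ^ ((1:ℝ)/4) := by
  unfold Bfun
  rw [show (1 - C^2*(σ₁ g)^2) = -(C^2*(σ₁ g)^2 - 1) from by ring]

theorem covol_eq_det (F : Type*) [Field F] [NumberField F]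
    (hdeg : Module.finrank ℚ F = 2)
    (σ₁ σ₂ : F →+* ℝ) (hσ : σ₁ ≠ σ₂) (I : FractionalIdeal (𝓞 F)⁰ F)
    (b₁ b₂ : F) (hb₁ : b₁ ∈ I) (hb₂ : b₂ ∈ I)
    (hspan : ∀ g : F, g ∈ I → ∃ s t : ℤ, g = s • b₁ + t • b₂)
    (hind : ∀ s t : ℤ, (s • b₁ + t • b₂ : F) = 0 → s = 0 ∧ t = 0) :
    qcovol F I = |σ₁ b₁ * σ₂ b₂ - σ₂ b₁ * σ₁ b₂| := by
  classical
  -- the ℤ-basis of I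
  have hb₁' : b₁ ∈ (I : Submodule (𝓞 F) F) := hb₁
  have hb₂' : b₂ ∈ (I : Submodule (𝓞 F) F) := hb₂
  set v : Fin 2 → (I : Submodule (𝓞 F) F) := ![⟨b₁, hb₁'⟩, ⟨b₂, hb₂'⟩] with hv
  have hli : LinearIndependent ℤ v := by
    rw [Fintype.linearIndependent_iff]
    intro g hg
    have hg' : (g 0 : ℤ) • b₁ + (g 1 : ℤ) • b₂ = 0 := by
      have := congrArg (Subtype.val) hg
      simpa [hv, Fin.sum_univ_two] using this
    have := hind _ _ hg'
    intro i; fin_cases i <;> simp [this.1, this.2]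
  have hsp : ⊤ ≤ Submodule.span ℤ (Set.range v) := by
    rintro ⟨x, hx⟩ -
    obtain ⟨s, t, hst⟩ := hspan x hx
    have hrange : Set.range v = {v 0, v 1} := by
      ext y; constructor
      · rintro ⟨i, rfl⟩; fin_cases i <;> simp
      · rintro (rfl | rfl) <;> exact ⟨_, rfl⟩
    rw [hrange, Submodule.mem_span_pair]
    refine ⟨s, t, ?_⟩
    apply Subtype.ext
    simpa [hv] using hst.symm
  set B2 : Basis (Fin 2) ℤ (I : Submodule (𝓞 F) F) := Basis.mk hli hsp with hB2
  have hcard : Fintype.card (Free.ChooseBasisIndex ℤ (𝓞 F)) = 2 := by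
    rw [← Module.finrank_eq_card_chooseBasisIndex, RingOfIntegers.rank, hdeg]
  let eqv : Fin 2 ≃ Free.ChooseBasisIndex ℤ (𝓞 F) :=
    Fintype.equivOfCardEq (by simp [hcard])
  let bI : Basis (Free.ChooseBasisIndex ℤ (𝓞 F)) ℤ (I : Submodule (𝓞 F) F) := B2.reindex eqv
  have h1 : |(integralBasis F).det (Subtype.val ∘ bI)| = FractionalIdeal.absNorm I :=
    FractionalIdeal.abs_det_basis_change (RingOfIntegers.basis F) I bI
  -- bases over ℚ
  set b₀ : Basis (Free.ChooseBasisIndex ℤ (𝓞 F)) ℚ F := integralBasis F with hb₀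
  set bQ : Basis (Fin 2) ℚ F := b₀.reindex eqv.symm with hbQ
  set w : Fin 2 → F := fun i => (bI (eqv i) : F) with hwdef
  have hw0 : w 0 = b₁ := by
    simp only [hwdef, bI, Basis.reindex_apply, Equiv.symm_apply_apply, hB2, Basis.coe_mk, hv]
    rfl
  have hw1 : w 1 = b₂ := by
    simp only [hwdef, bI, Basis.reindex_apply, Equiv.symm_apply_apply, hB2, Basis.coe_mk, hv]
    rfl
  have hdet : bQ.det w = b₀.det (Subtype.val ∘ bI) := by
    rw [hbQ, Basis.det_reindex]
    congr 1
    ext i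
    simp [hwdef]
  -- the bilinear form D
  set D : F → F → ℝ := fun x y => σ₁ x * σ₂ y - σ₂ x * σ₁ y with hD
  have hrepr : ∀ x : F, x = bQ.repr x 0 • bQ 0 + bQ.repr x 1 • bQ 1 := by
    intro x
    have := bQ.sum_repr x
    rw [Fin.sum_univ_two] at this
    exact this.symm
  have hsigma : ∀ (σ : F →+* ℝ) (x : F),
      σ x = (bQ.repr x 0 : ℝ) * σ (bQ 0) + (bQ.repr x 1 : ℝ) * σ (bQ 1) := by
    intro σ x
    conv_lhs => rw [hrepr x]
    rw [map_add]
    congr 1 <;> rw [Rat.smul_def, map_mul, map_ratCast]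
  have hDdet : D (w 0) (w 1) = ((bQ.det w : ℚ) : ℝ) * D (bQ 0) (bQ 1) := by
    rw [Basis.det_apply, Matrix.det_fin_two]
    simp only [hD, Basis.toMatrix_apply]
    rw [hsigma σ₁ (w 0), hsigma σ₂ (w 0), hsigma σ₁ (w 1), hsigma σ₂ (w 1)]
    push_cast
    ring
  -- the discriminant computation
  set τ₁ : F →+* ℂ := (algebraMap ℝ ℂ).comp σ₁ with hτ₁
  set τ₂ : F →+* ℂ := (algebraMap ℝ ℂ).comp σ₂ with hτ₂
  have hτ : τ₁ ≠ τ₂ := by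
    intro h
    apply hσ
    ext x
    have := congrArg (fun φ => φ x) h
    simpa [hτ₁, hτ₂, Complex.ofReal_inj] using this
  have hcard2 : Fintype.card (F →ₐ[ℚ] ℂ) = 2 := by
    rw [← Fintype.card_congr (RingHom.equivRatAlgHom (R := F) (S := ℂ)),
      NumberField.Embeddings.card F ℂ, hdeg]
  set f : Fin 2 → (F →ₐ[ℚ] ℂ) := ![RingHom.equivRatAlgHom F ℂ τ₁, RingHom.equivRatAlgHom F ℂ τ₂] with hf
  have h01 : f 0 ≠ f 1 := by
    intro hh
    exact hτ ((RingHom.equivRatAlgHom F ℂ).injective (by simpa [hf] using hh))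
  have hfinj : Function.Injective f := by
    intro i j hij
    fin_cases i <;> fin_cases j <;>
      first
      | rfl
      | exact absurd hij h01
      | exact absurd hij.symm h01
  set e : Fin 2 ≃ (F →ₐ[ℚ] ℂ) := Equiv.ofBijective f
    ((Fintype.bijective_iff_injective_and_card f).2 ⟨hfinj, by simp [hcard2]⟩) with he
  have hdiscr := Algebra.discr_eq_det_embeddingsMatrixReindex_pow_two ℚ ℂ (⇑bQ) e
  have hdiscr_bQ : Algebra.discr ℚ (⇑bQ) = (NumberField.discr F : ℚ) := by
    have h1 : ⇑bQ = ⇑b₀ ∘ ⇑eqv := by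
      rw [hbQ, Basis.coe_reindex]
      simp
    rw [h1, show (⇑eqv : Fin 2 → _) = ⇑(eqv.symm).symm from rfl,
      Algebra.discr_reindex ℚ b₀ eqv.symm, hb₀, ← NumberField.coe_discr]
  have hentry : ∀ i j : Fin 2, Algebra.embeddingsMatrixReindex ℚ ℂ (⇑bQ) e i j
      = (e j) (bQ i) := by
    intro i j
    simp [Algebra.embeddingsMatrixReindex, Algebra.embeddingsMatrix]
  have happ : ∀ (τ : F →+* ℝ) (x : F),
      (RingHom.equivRatAlgHom F ℂ ((algebraMap ℝ ℂ).comp τ)) x = ((τ x : ℝ) : ℂ) := by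
    intro τ x
    simp [RingHom.equivRatAlgHom_apply]
  have hdetC : (Algebra.embeddingsMatrixReindex ℚ ℂ (⇑bQ) e).det
      = ((D (bQ 0) (bQ 1) : ℝ) : ℂ) := by
    rw [Matrix.det_fin_two, hentry, hentry, hentry, hentry]
    have he0 : e 0 = RingHom.equivRatAlgHom F ℂ τ₁ := by rw [he]; rfl
    have he1 : e 1 = RingHom.equivRatAlgHom F ℂ τ₂ := by rw [he]; rfl
    rw [he0, he1, hτ₁, hτ₂, happ, happ, happ, happ, hD]
    push_cast
    ring
  have hD2 : (NumberField.discr F : ℝ) = (D (bQ 0) (bQ 1)) ^ 2 := by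
    apply Complex.ofReal_injective
    have : ((NumberField.discr F : ℚ) : ℂ) = ((D (bQ 0) (bQ 1) : ℝ) : ℂ) ^ 2 := by
      rw [← hdiscr_bQ, ← hdetC]
      exact_mod_cast hdiscr
    push_cast at this ⊢
    exact_mod_cast this
  -- put it together
  have habs : (FractionalIdeal.absNorm I : ℝ) = |((bQ.det w : ℚ) : ℝ)| := by
    rw [hdet, ← h1]
    push_cast
    ring
  rw [qcovol, habs, hD2, Real.sqrt_sq_eq_abs, ← abs_mul, mul_comm, ← hDdet, hw0, hw1, hD]


end AuxLemmas

set_option maxHeartbeats 1000000 in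
/-- Let `F` be a real quadratic field, `C ≥ 1`, `I` a fractional ideal satisfying `(⋆)`,
and `{b₁, b₂}` an LLL-reduced basis of `I` with `‖b₁‖` the length of the shortest nonzero
vector of `I`. If `g = s₁·b₁ + b₂ ∈ G′` with `s₁ ∈ ℤ`, then either `|s₁| ≤ 2`, or `s₁` lies
strictly between `(−1/C − b_{2j})/b_{1j}` and `(1/C − b_{2j})/b_{1j}` for the index
`j ∈ {1,2}` with `|b_{1j}| > 1/C`; in all cases `|s₁| < 1 + 2C`. -/
theorem stmt_13 (F : Type*) [Field F] [NumberField F]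
    (hdeg : Module.finrank ℚ F = 2)
    (σ₁ σ₂ : F →+* ℝ) (hσ : σ₁ ≠ σ₂)
    (C : ℝ) (hC : 1 ≤ C) (I : FractionalIdeal (𝓞 F)⁰ F)
    (hstar : starCond F σ₁ σ₂ C I)
    (b₁ b₂ : F) (hLLL : isLLLBasis F σ₁ σ₂ I b₁ b₂)
    (hshort : ∀ g : F, g ∈ I → g ≠ 0 → qnorm σ₁ σ₂ b₁ ≤ qnorm σ₁ σ₂ g) :
    ∀ s₁ : ℤ, inG' F σ₁ σ₂ C I (s₁ • b₁ + b₂) →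
      ((|s₁| ≤ 2 ∨
        ∃ j : Fin 2, 1 / C < |![σ₁ b₁, σ₂ b₁] j| ∧
          min ((-(1 / C) - ![σ₁ b₂, σ₂ b₂] j) / ![σ₁ b₁, σ₂ b₁] j)
              ((1 / C - ![σ₁ b₂, σ₂ b₂] j) / ![σ₁ b₁, σ₂ b₁] j) < (s₁ : ℝ) ∧
          (s₁ : ℝ) < max ((-(1 / C) - ![σ₁ b₂, σ₂ b₂] j) / ![σ₁ b₁, σ₂ b₁] j)
              ((1 / C - ![σ₁ b₂, σ₂ b₂] j) / ![σ₁ b₁, σ₂ b₁] j)) ∧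
       (|s₁| : ℝ) < 1 + 2 * C) := by

  classical
  obtain ⟨hb₁I, hb₂I, hspan, hindep, hmuLLL, hlll⟩ := hLLL
  obtain ⟨⟨h1I, hprim⟩, hS1, f, hfI, hfne, hfmin, hflo, hfhi⟩ := hstar
  have hC0 : (0:ℝ) < C := by linarith
  intro s₁ hg'
  obtain ⟨⟨hgI, hgne, hgprod, hgnorm⟩, hBor⟩ := hg'
  obtain ⟨a1, ha1⟩ : ∃ x : ℝ, x = σ₁ b₁ := ⟨_, rfl⟩
  obtain ⟨a2, ha2⟩ : ∃ x : ℝ, x = σ₂ b₁ := ⟨_, rfl⟩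
  obtain ⟨c1, hc1⟩ : ∃ x : ℝ, x = σ₁ b₂ := ⟨_, rfl⟩
  obtain ⟨c2, hc2⟩ : ∃ x : ℝ, x = σ₂ b₂ := ⟨_, rfl⟩
  rw [← ha1, ← ha2, ← hc1, ← hc2] at hmuLLL hlll
  have hneg_mem : ∀ x : F, x ∈ I → -x ∈ I := by
    intro x hx
    rw [← FractionalIdeal.mem_coe] at hx ⊢
    exact neg_mem hx
  have hb1ne : b₁ ≠ 0 := by
    intro h
    exact one_ne_zero (hindep 1 0 (by simp [h])).1
  have hb2ne : b₂ ≠ 0 := by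
    intro h
    exact one_ne_zero (hindep 0 1 (by simp [h])).2
  have ha1ne : a1 ≠ 0 := by
    rw [ha1]
    exact fun h => hb1ne (σ₁.injective (by rw [map_zero]; exact h))
  have ha2ne : a2 ≠ 0 := by
    rw [ha2]
    exact fun h => hb1ne (σ₂.injective (by rw [map_zero]; exact h))
  have hL2pos : 0 < a1^2 + a2^2 := by
    have h1 : 0 < a1^2 := lt_of_le_of_ne (sq_nonneg a1) (Ne.symm (pow_ne_zero 2 ha1ne))
    nlinarith [sq_nonneg a2]
  set L2 := a1^2 + a2^2 with hL2def
  set d := c1*a1 + c2*a2 with hddef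
  set mu := d / L2 with hmudef
  set Bsq := (c1^2+c2^2) - d^2/L2 with hBsqdef
  -- hmuLLL : |mu| ≤ 1/2
  have hmu2 : mu^2 ≤ 1/4 := by
    obtain ⟨u1, u2⟩ := abs_le.mp hmuLLL
    nlinarith
  have hBsqlll : (3/4 - mu^2)*L2 ≤ Bsq := by
    have hid : (c1 - mu*a1)^2 + (c2 - mu*a2)^2 = Bsq := by
      rw [hBsqdef, hmudef, hddef, hL2def]
      have : a1^2 + a2^2 ≠ 0 := by rw [← hL2def]; exact ne_of_gt hL2pos
      field_simp
      ring
    rw [← hid]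
    exact hlll
  have hBsq0 : 0 ≤ Bsq := le_trans (mul_nonneg (by nlinarith) hL2pos.le) hBsqlll
  have hL2ne : a1^2 + a2^2 ≠ 0 := by rw [← hL2def]; exact ne_of_gt hL2pos
  have hnormid : ∀ x y : ℝ, (x*a1 + y*c1)^2 + (x*a2 + y*c2)^2 = (x + y*mu)^2*L2 + y^2*Bsq := by
    intro x y
    rw [hmudef, hBsqdef, hddef, hL2def]
    exact aux_normsq a1 a2 c1 c2 x y hL2ne
  have hmuBsq : mu^2*L2 + Bsq = c1^2+c2^2 := by
    rw [hmudef, hBsqdef, hddef, hL2def]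
    field_simp
    ring
  clear_value L2 d mu Bsq
  -- bounds on L2
  have hn1lo : 1/C < qnorm σ₁ σ₂ b₁ := lt_of_lt_of_le hflo (hfmin b₁ hb₁I hb1ne)
  have hn1hi : qnorm σ₁ σ₂ b₁ < Real.sqrt 2 / C := lt_of_le_of_lt (hshort f hfI hfne) hfhi
  rw [qnorm] at hn1lo hn1hi
  rw [← ha1, ← ha2, ← hL2def] at hn1lo hn1hi
  have hL2lo : 1/C^2 < L2 := by
    have h := (Real.lt_sqrt (by positivity)).mp hn1lo
    rw [div_pow, one_pow] at h
    exact h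
  have hL2hi : L2 < 2/C^2 := by
    have h := (Real.sqrt_lt' (by positivity)).mp hn1hi
    rw [div_pow, Real.sq_sqrt (by norm_num : (0:ℝ) ≤ 2)] at h
    exact h
  -- the second basis vector is at most √2 long
  have hc2sq : c1^2 + c2^2 ≤ 2 := by
    obtain ⟨p, q, hpq⟩ := hspan 1 h1I
    rcases eq_or_ne q 0 with rfl | hq
    · exfalso
      rw [zero_smul, add_zero, zsmul_eq_mul] at hpq
      have hp0 : p ≠ 0 := by
        rintro rfl
        rw [Int.cast_zero, zero_mul] at hpq
        exact one_ne_zero hpq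
      have hpF : ((p:ℤ):F) ≠ 0 := Int.cast_ne_zero.mpr hp0
      rcases lt_or_ge |p| 2 with hp2 | hp2
      · have hb : -2 < p ∧ p < 2 := ⟨by linarith [neg_abs_le p], by linarith [le_abs_self p]⟩
        have hp1 : p = 1 ∨ p = -1 := by omega
        have hL22 : L2 = 2 := by
          rcases hp1 with rfl | rfl
          · rw [Int.cast_one, one_mul] at hpq
            rw [hL2def, ha1, ha2, ← hpq]
            norm_num
          · have hb₁eq : b₁ = -1 := by linear_combination hpq
            rw [hL2def, ha1, ha2, hb₁eq]
            norm_num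
        nlinarith [mul_pos hC0 hC0, (by field_simp : (2/C^2)*C^2 = 2)]
      · apply hprim |p| (by omega)
        rcases lt_or_ge p 0 with hpneg | hppos
        · have habs : |p| = -p := abs_of_neg hpneg
          have : (1:F)/((|p|:ℤ):F) = -b₁ := by
            rw [habs]
            push_cast
            rw [div_eq_iff (by exact_mod_cast neg_ne_zero.mpr hpF)]
            linear_combination hpq
          rw [this]
          exact hneg_mem b₁ hb₁I
        · have habs : |p| = p := abs_of_nonneg hppos
          have : (1:F)/((|p|:ℤ):F) = b₁ := by
            rw [habs, div_eq_iff hpF]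
            linear_combination hpq
          rw [this]
          exact hb₁I
    · have e1 : σ₁ ((p:ℤ) • b₁ + (q:ℤ) • b₂) = (p:ℝ)*a1 + (q:ℝ)*c1 := by
        rw [map_add, map_zsmul, map_zsmul, zsmul_eq_mul, zsmul_eq_mul, ← ha1, ← hc1]
      have e2 : σ₂ ((p:ℤ) • b₁ + (q:ℤ) • b₂) = (p:ℝ)*a2 + (q:ℝ)*c2 := by
        rw [map_add, map_zsmul, map_zsmul, zsmul_eq_mul, zsmul_eq_mul, ← ha2, ← hc2]
      rw [← hpq] at e1 e2
      simp only [map_one] at e1 e2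
      have hcoord : ((p:ℝ)*a1 + (q:ℝ)*c1)^2 + ((p:ℝ)*a2 + (q:ℝ)*c2)^2 = 2 := by
        rw [← e1, ← e2]; norm_num
      have hsec := aux_secmin L2 Bsq mu p q hL2pos hmuLLL hBsqlll hq
      have hid := hnormid (p:ℝ) (q:ℝ)
      rw [hcoord] at hid
      linarith [hmuBsq]
  -- coordinates of g
  have hG1eq : σ₁ (s₁ • b₁ + b₂) = (s₁:ℝ)*a1 + c1 := by
    rw [map_add, map_zsmul, zsmul_eq_mul, ← ha1, ← hc1]
  have hG2eq : σ₂ (s₁ • b₁ + b₂) = (s₁:ℝ)*a2 + c2 := by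
    rw [map_add, map_zsmul, zsmul_eq_mul, ← ha2, ← hc2]
  set G1 : ℝ := (s₁:ℝ)*a1 + c1 with hG1def
  set G2 : ℝ := (s₁:ℝ)*a2 + c2 with hG2def
  clear_value G1 G2
  have hgprodG : (G1^2 - 1/C^2) * (G2^2 - 1/C^2) < 0 := by
    rw [← hG1eq, ← hG2eq]
    exact hgprod
  have hidg : G1^2 + G2^2 = ((s₁:ℝ) + mu)^2*L2 + Bsq := by
    have h := hnormid (s₁:ℝ) 1
    simp only [one_mul, one_pow] at h
    rw [hG1def, hG2def]
    exact h
  -- which coordinate of b₁ is large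
  have hS1b := hS1 b₁ hb₁I hb1ne
  have hbig : 1/C^2 < a1^2 ∨ 1/C^2 < a2^2 := by
    by_contra hcon
    push_neg at hcon
    apply hS1b
    refine ⟨?_, ?_, ?_⟩
    · rw [← ha1]
      exact aux_abs_le_of_sq C a1 hC0 hcon.1
    · rw [← ha2]
      exact aux_abs_le_of_sq C a2 hC0 hcon.2
    · rw [← ha1, ← ha2, ← hL2def]
      exact hL2hi
  -- the final numeric wrap-up for the |s₁| ≤ 2 cases
  have hfinal : ((s₁:ℝ) + mu)^2 < 25/4 →
      ((|s₁| ≤ 2 ∨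
        ∃ j : Fin 2, 1 / C < |![σ₁ b₁, σ₂ b₁] j| ∧
          min ((-(1 / C) - ![σ₁ b₂, σ₂ b₂] j) / ![σ₁ b₁, σ₂ b₁] j)
              ((1 / C - ![σ₁ b₂, σ₂ b₂] j) / ![σ₁ b₁, σ₂ b₁] j) < (s₁ : ℝ) ∧
          (s₁ : ℝ) < max ((-(1 / C) - ![σ₁ b₂, σ₂ b₂] j) / ![σ₁ b₁, σ₂ b₁] j)
              ((1 / C - ![σ₁ b₂, σ₂ b₂] j) / ![σ₁ b₁, σ₂ b₁] j)) ∧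
       (|s₁| : ℝ) < 1 + 2 * C) := by
    intro h
    have h3 : |(s₁:ℝ)| < 3 := aux_caseB_s _ _ hmuLLL h
    have h3' : |s₁| ≤ 2 := by
      have h4 : (|s₁|:ℝ) < 3 := by push_cast; exact h3
      have h5 : |s₁| < 3 := by exact_mod_cast h4
      omega
    refine ⟨Or.inl h3', ?_⟩
    have h6 : (|s₁|:ℝ) ≤ 2 := by exact_mod_cast h3'
    linarith
  -- shared finish through the covolume bound
  have hgnormsq : G1^2 + G2^2 < (4/Real.pi*C*qcovol F I)^2 := by
    have hR : 0 < 4/Real.pi*C*qcovol F I := lt_of_le_of_lt (Real.sqrt_nonneg _) hgnorm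
    have hgn := hgnorm
    rw [qnorm] at hgn
    have h := (Real.sqrt_lt' hR).mp hgn
    rw [hG1eq, hG2eq] at h
    exact h
  have hcovfinish : ∀ h : F, h ∈ I → (∀ p : ℤ, h ≠ p • b₁) →
      C^2*((σ₁ h)^2+(σ₂ h)^2) < 9/4 → ((s₁:ℝ)+mu)^2 < 25/4 := by
    intro h hhI hnotmul hhnormsq
    obtain ⟨p, q, hpq⟩ := hspan h hhI
    have hq0 : q ≠ 0 := by
      rintro rfl
      exact hnotmul p (by simpa using hpq)
    have e1 : σ₁ h = (p:ℝ)*a1 + (q:ℝ)*c1 := by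
      rw [hpq, map_add, map_zsmul, map_zsmul, zsmul_eq_mul, zsmul_eq_mul, ← ha1, ← hc1]
    have e2 : σ₂ h = (p:ℝ)*a2 + (q:ℝ)*c2 := by
      rw [hpq, map_add, map_zsmul, map_zsmul, zsmul_eq_mul, zsmul_eq_mul, ← ha2, ← hc2]
    have hsec := aux_secmin L2 Bsq mu p q hL2pos hmuLLL hBsqlll hq0
    have hidh := hnormid (p:ℝ) (q:ℝ)
    rw [← e1, ← e2] at hidh
    have hBsqhi : C^2*Bsq < 9/4 := by
      have h1 : Bsq ≤ (σ₁ h)^2 + (σ₂ h)^2 := by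
        have h2 : 0 ≤ mu^2*L2 := mul_nonneg (sq_nonneg mu) hL2pos.le
        linarith only [h2, hsec, hidh, hmuBsq]
      have h2 : C^2*Bsq ≤ C^2*((σ₁ h)^2 + (σ₂ h)^2) :=
        mul_le_mul_of_nonneg_left h1 (by positivity)
      linarith only [h2, hhnormsq]
    have hcov := covol_eq_det F hdeg σ₁ σ₂ hσ I b₁ b₂ hb₁I hb₂I hspan hindep
    rw [← ha1, ← ha2, ← hc1, ← hc2] at hcov
    have hcovsq : (qcovol F I)^2 = L2*Bsq := by
      rw [hcov, sq_abs, hBsqdef, hddef, hL2def]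
      field_simp
      ring
    have hglt : G1^2+G2^2 < 16/Real.pi^2*C^2*(L2*Bsq) := by
      rw [← hcovsq]
      calc G1^2+G2^2 < (4/Real.pi*C*qcovol F I)^2 := hgnormsq
      _ = 16/Real.pi^2*C^2*(qcovol F I)^2 := by ring
    exact aux_caseB_cov C (s₁:ℝ) mu L2 Bsq G1 G2 hC hL2pos hidg hBsq0 hglt hBsqhi
  rcases mul_neg_iff.mp hgprodG with ⟨hg1big, hg2small⟩ | ⟨hg1small, hg2big⟩
  · -- G1 is big, G2 is small
    rcases hbig with ha1big | ha2big
    · -- case B with k = 2 : G1 big, G2 small, a1 big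
      have ha2small : a2^2 < 1/C^2 := by
        linarith only [hL2hi, hL2def.le, hL2def.ge, ha1big,
          (by ring : (2:ℝ)/C^2 = 2*(1/C^2))]
      have hXz : 0 < C^2*G1^2 - 1 := by
        have := aux_one_lt_mul C (G1^2) hC0 (by linarith)
        linarith
      have hYz : 0 < 1 - C^2*G2^2 := by
        have := aux_mul_lt_one C (G2^2) hC0 (by linarith)
        linarith
      set rg := (C^2*G1^2 - 1)/(1 - C^2*G2^2) with hrgdef
      have hrgpos : 0 < rg := div_pos hXz hYz
      have hBg : Bfun σ₁ σ₂ C (s₁ • b₁ + b₂) = rg ^ ((1:ℝ)/4) := by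
        rw [aux_Bfun_k2 σ₁ σ₂ C (s₁ • b₁ + b₂), hG1eq, hG2eq, hrgdef]
      have hb₁norm : qnorm σ₁ σ₂ b₁ < 4/Real.pi*C*qcovol F I :=
        lt_of_le_of_lt (hshort _ hgI hgne) hgnorm
      have hb₁prod : ((σ₁ b₁)^2 - 1/C^2) * ((σ₂ b₁)^2 - 1/C^2) < 0 := by
        rw [← ha1, ← ha2]
        exact mul_neg_of_pos_of_neg (by linarith) (by linarith)
      have hb₁G2 : b₁ ∈ setG2 F σ₁ σ₂ C I :=
        ⟨⟨hb₁I, hb1ne, hb₁prod, hb₁norm⟩, by rw [← ha2]; linarith⟩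
      have hrbz1 : 0 < C^2*a1^2 - 1 := by
        have := aux_one_lt_mul C (a1^2) hC0 ha1big
        linarith
      have hrbz2 : 0 < 1 - C^2*a2^2 := by
        have := aux_mul_lt_one C (a2^2) hC0 ha2small
        linarith
      have hBb : Bfun σ₁ σ₂ C b₁ = ((C^2*a1^2-1)/(1-C^2*a2^2)) ^ ((1:ℝ)/4) := by
        rw [aux_Bfun_k2 σ₁ σ₂ C b₁, ← ha1, ← ha2]
      have hrb1 : (C^2*a1^2-1)/(1-C^2*a2^2) < 1 := by
        rw [div_lt_one hrbz2]
        have h2 : C^2*L2 < 2 := by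
          calc C^2*L2 < C^2*(2/C^2) := mul_lt_mul_of_pos_left hL2hi (by positivity)
          _ = 2 := by field_simp
        rw [hL2def] at h2
        linarith only [h2]
      have hfin : ((s₁:ℝ)+mu)^2 < 25/4 := by
        rcases hBor with hBeq | hBeq
        · -- B(g) = Bmax : compare with b₁
          have hne2 : (setG2 F σ₁ σ₂ C I).Nonempty := ⟨b₁, hb₁G2⟩
          rw [Bmax, if_pos hne2] at hBeq
          have hbdd : BddBelow (Bfun σ₁ σ₂ C '' setG2 F σ₁ σ₂ C I) := by
            refine ⟨0, ?_⟩
            rintro y ⟨x, ⟨⟨_, _, hxprod, _⟩, hxsmall⟩, rfl⟩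
            rw [aux_Bfun_k2]
            apply Real.rpow_nonneg
            apply div_nonneg
            · rcases mul_neg_iff.mp hxprod with ⟨hp, hn⟩ | ⟨hn, hp⟩
              · have := aux_one_lt_mul C ((σ₁ x)^2) hC0 (by linarith)
                linarith
              · linarith
            · have := aux_mul_lt_one C ((σ₂ x)^2) hC0 hxsmall
              linarith
          have hle : Bfun σ₁ σ₂ C (s₁ • b₁ + b₂) ≤ Bfun σ₁ σ₂ C b₁ := by
            rw [hBeq]
            exact csInf_le hbdd (Set.mem_image_of_mem _ hb₁G2)
          have hrle : rg ≤ (C^2*a1^2-1)/(1-C^2*a2^2) :=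
            aux_quart_le hrgpos.le (le_of_lt (div_pos hrbz1 hrbz2))
              (by rw [← hBg, ← hBb]; exact hle)
          have h6 : C^2*(G1^2+G2^2) ≤ 6 :=
            aux_ratio6_k2 C G1 G2 (by linarith) (by rw [← hrgdef]; linarith)
          exact aux_caseB_six C (s₁:ℝ) mu L2 Bsq G1 G2 hC0 hL2lo hidg hBsq0 h6
        · by_cases hne1 : (setG1 F σ₁ σ₂ C I).Nonempty
          · rw [Bmin, if_pos hne1] at hBeq
            by_cases hrg4 : rg ≤ 4
            · have h6 : C^2*(G1^2+G2^2) ≤ 6 :=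
                aux_ratio6_k2 C G1 G2 (by linarith) (by rw [← hrgdef]; linarith)
              exact aux_caseB_six C (s₁:ℝ) mu L2 Bsq G1 G2 hC0 hL2lo hidg hBsq0 h6
            · push_neg at hrg4
              have h44 : (4:ℝ)^((1:ℝ)/4) <
                  sSup (Bfun σ₁ σ₂ C '' setG1 F σ₁ σ₂ C I) := by
                rw [← hBeq, hBg]
                exact Real.rpow_lt_rpow (by norm_num) hrg4 (by norm_num)
              obtain ⟨y, hymem, hy⟩ := exists_lt_of_lt_csSup (hne1.image _) h44
              obtain ⟨h, hhmem, rfl⟩ := hymem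
              obtain ⟨⟨hhI, hhne, hhprod, hhnorm⟩, hh1⟩ := hhmem
              have hhY : 0 < C^2*(σ₂ h)^2 - 1 := by
                rcases mul_neg_iff.mp hhprod with ⟨hp, hn⟩ | ⟨hn, hp⟩
                · linarith
                · have := aux_one_lt_mul C ((σ₂ h)^2) hC0 (by linarith)
                  linarith
              have hhX : 0 < 1 - C^2*(σ₁ h)^2 := by
                have := aux_mul_lt_one C ((σ₁ h)^2) hC0 hh1
                linarith
              have hrh4 : 4 < (1-C^2*(σ₁ h)^2)/(C^2*(σ₂ h)^2-1) := by
                apply aux_quart_lt (by norm_num) (le_of_lt (div_pos hhX hhY))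
                rw [← aux_Bfun_k1 σ₁ σ₂ C h]
                exact hy
              have hhnormsq : C^2*((σ₁ h)^2 + (σ₂ h)^2) < 9/4 := by
                have h4Y := (lt_div_iff₀ hhY).mp hrh4
                linarith only [h4Y, hhX]
              apply hcovfinish h hhI ?_ hhnormsq
              intro p hp
              have hp0 : p ≠ 0 := by
                rintro rfl
                rw [zero_smul] at hp
                exact hhne hp
              have hp1 : (1:ℝ) ≤ (p:ℝ)^2 := by
                have h1 : (1:ℝ) ≤ |(p:ℝ)| := by
                  rw [← Int.cast_abs]
                  exact_mod_cast Int.one_le_abs hp0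
                linarith only [mul_le_mul h1 h1 (by norm_num : (0:ℝ) ≤ 1) (abs_nonneg (p:ℝ)),
                  sq_abs (p:ℝ)]
              have hσ1h : σ₁ h = (p:ℝ)*a1 := by
                rw [hp, zsmul_eq_mul, map_mul, map_intCast, ← ha1]
              have hcontr : 1/C^2 < (σ₁ h)^2 := by
                rw [hσ1h, mul_pow]
                linarith only [mul_le_mul_of_nonneg_right hp1 (sq_nonneg a1), ha1big]
              linarith
          · rw [Bmin, if_neg hne1] at hBeq
            have hhalf : rg ^ ((1:ℝ)/4) < 1 := by
              rw [← hBg, hBeq]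
              have h1 := aux_one_le_sqrt C hC
              have h2 : (0:ℝ) < 2*Real.sqrt C := by linarith only [h1]
              rw [div_lt_one h2]
              linarith only [h1]
            have hrg1 : rg < 1 := by
              apply aux_quart_lt hrgpos.le (by norm_num)
              rw [Real.one_rpow]
              exact hhalf
            have h6 : C^2*(G1^2+G2^2) ≤ 6 :=
              aux_ratio6_k2 C G1 G2 (by linarith) (by rw [← hrgdef]; linarith)
            exact aux_caseB_six C (s₁:ℝ) mu L2 Bsq G1 G2 hC0 hL2lo hidg hBsq0 h6
      exact hfinal hfin
    · -- case A with j = 1 : a2 big, G2 small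
      have hG2sq : G2^2 < 1/C^2 := by linarith
      have habs2 : |G2| < 1/C := aux_abs_lt_of_sq C G2 hC0 hG2sq
      obtain ⟨hlo2, hhi2⟩ := abs_lt.mp habs2
      have hmm := aux_caseA_minmax C (s₁:ℝ) a2 c2 ha2ne (by rw [hG2def] at hlo2; exact hlo2)
        (by rw [hG2def] at hhi2; exact hhi2)
      refine ⟨Or.inr ⟨1, ?_, ?_, ?_⟩, ?_⟩
      · simp only [Matrix.cons_val_one, Matrix.head_cons]
        rw [← ha2]
        exact aux_lt_abs_of_sq C a2 hC0 ha2big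
      · simp only [Matrix.cons_val_one, Matrix.head_cons]
        rw [← ha2, ← hc2]
        exact hmm.1
      · simp only [Matrix.cons_val_one, Matrix.head_cons]
        rw [← ha2, ← hc2]
        exact hmm.2
      · by_contra hcon
        push_neg at hcon
        push_cast at hcon
        exact aux_caseA_bound C (s₁:ℝ) a2 c2 hC ha2big (by linarith [hc2sq, sq_nonneg c1])
          (by rw [hG2def] at hG2sq; exact hG2sq) hcon
  · -- G1 is small, G2 is big
    rcases hbig with ha1big | ha2big
    · -- case A with j = 0 : a1 big, G1 small
      have hG1sq : G1^2 < 1/C^2 := by linarith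
      have habs1 : |G1| < 1/C := aux_abs_lt_of_sq C G1 hC0 hG1sq
      obtain ⟨hlo1, hhi1⟩ := abs_lt.mp habs1
      have hmm := aux_caseA_minmax C (s₁:ℝ) a1 c1 ha1ne (by rw [hG1def] at hlo1; exact hlo1)
        (by rw [hG1def] at hhi1; exact hhi1)
      refine ⟨Or.inr ⟨0, ?_, ?_, ?_⟩, ?_⟩
      · simp only [Matrix.cons_val_zero]
        rw [← ha1]
        exact aux_lt_abs_of_sq C a1 hC0 ha1big
      · simp only [Matrix.cons_val_zero]
        rw [← ha1, ← hc1]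
        exact hmm.1
      · simp only [Matrix.cons_val_zero]
        rw [← ha1, ← hc1]
        exact hmm.2
      · by_contra hcon
        push_neg at hcon
        push_cast at hcon
        exact aux_caseA_bound C (s₁:ℝ) a1 c1 hC ha1big (by linarith [hc2sq, sq_nonneg c2])
          (by rw [hG1def] at hG1sq; exact hG1sq) hcon
    · -- case B with k = 1 : G1 small, G2 big, a2 big
      have ha1small : a1^2 < 1/C^2 := by
        linarith only [hL2hi, hL2def.le, hL2def.ge, ha2big,
          (by ring : (2:ℝ)/C^2 = 2*(1/C^2))]
      have hXz : 0 < 1 - C^2*G1^2 := by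
        have := aux_mul_lt_one C (G1^2) hC0 (by linarith)
        linarith
      have hYz : 0 < C^2*G2^2 - 1 := by
        have := aux_one_lt_mul C (G2^2) hC0 (by linarith)
        linarith
      set rg := (1 - C^2*G1^2)/(C^2*G2^2 - 1) with hrgdef
      have hrgpos : 0 < rg := div_pos hXz hYz
      have hBg : Bfun σ₁ σ₂ C (s₁ • b₁ + b₂) = rg ^ ((1:ℝ)/4) := by
        rw [aux_Bfun_k1 σ₁ σ₂ C (s₁ • b₁ + b₂), hG1eq, hG2eq, hrgdef]
      have hb₁norm : qnorm σ₁ σ₂ b₁ < 4/Real.pi*C*qcovol F I :=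
        lt_of_le_of_lt (hshort _ hgI hgne) hgnorm
      have hb₁prod : ((σ₁ b₁)^2 - 1/C^2) * ((σ₂ b₁)^2 - 1/C^2) < 0 := by
        rw [← ha1, ← ha2]
        exact mul_neg_of_neg_of_pos (by linarith) (by linarith)
      have hb₁G1 : b₁ ∈ setG1 F σ₁ σ₂ C I :=
        ⟨⟨hb₁I, hb1ne, hb₁prod, hb₁norm⟩, by rw [← ha1]; linarith⟩
      have hrbz1 : 0 < 1 - C^2*a1^2 := by
        have := aux_mul_lt_one C (a1^2) hC0 ha1small
        linarith
      have hrbz2 : 0 < C^2*a2^2 - 1 := by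
        have := aux_one_lt_mul C (a2^2) hC0 ha2big
        linarith
      have hBb : Bfun σ₁ σ₂ C b₁ = ((1-C^2*a1^2)/(C^2*a2^2-1)) ^ ((1:ℝ)/4) := by
        rw [aux_Bfun_k1 σ₁ σ₂ C b₁, ← ha1, ← ha2]
      have hrb1 : 1 < (1-C^2*a1^2)/(C^2*a2^2-1) := by
        rw [lt_div_iff₀ hrbz2]

        have h2 : C^2*L2 < 2 := by
          calc C^2*L2 < C^2*(2/C^2) := mul_lt_mul_of_pos_left hL2hi (by positivity)
          _ = 2 := by field_simp
        rw [hL2def] at h2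
        linarith only [h2]
      have hfin : ((s₁:ℝ)+mu)^2 < 25/4 := by
        rcases hBor with hBeq | hBeq
        · -- B(g) = Bmax
          by_cases hne2 : (setG2 F σ₁ σ₂ C I).Nonempty
          · rw [Bmax, if_pos hne2] at hBeq
            by_cases hrg4 : 1/4 ≤ rg
            · have h6 : C^2*(G1^2+G2^2) ≤ 6 :=
                aux_ratio6_k1 C G1 G2 (by linarith) (by linarith) (by rw [← hrgdef]; linarith)
              exact aux_caseB_six C (s₁:ℝ) mu L2 Bsq G1 G2 hC0 hL2lo hidg hBsq0 h6
            · push_neg at hrg4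
              have h44 : sInf (Bfun σ₁ σ₂ C '' setG2 F σ₁ σ₂ C I)
                  < ((1:ℝ)/4)^((1:ℝ)/4) := by
                rw [← hBeq, hBg]
                exact Real.rpow_lt_rpow hrgpos.le hrg4 (by norm_num)
              obtain ⟨y, hymem, hy⟩ := exists_lt_of_csInf_lt (hne2.image _) h44
              obtain ⟨h, hhmem, rfl⟩ := hymem
              obtain ⟨⟨hhI, hhne, hhprod, hhnorm⟩, hh2⟩ := hhmem
              have hhY : 0 < 1 - C^2*(σ₂ h)^2 := by
                have := aux_mul_lt_one C ((σ₂ h)^2) hC0 hh2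
                linarith
              have hhX : 0 < C^2*(σ₁ h)^2 - 1 := by
                rcases mul_neg_iff.mp hhprod with ⟨hp, hn⟩ | ⟨hn, hp⟩
                · have := aux_one_lt_mul C ((σ₁ h)^2) hC0 (by linarith)
                  linarith
                · linarith
              have hrh4 : (C^2*(σ₁ h)^2-1)/(1-C^2*(σ₂ h)^2) < 1/4 := by
                apply aux_quart_lt (le_of_lt (div_pos hhX hhY)) (by norm_num)
                rw [← aux_Bfun_k2 σ₁ σ₂ C h]
                exact hy
              have hhnormsq : C^2*((σ₁ h)^2 + (σ₂ h)^2) < 9/4 := by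
                have h4Y := (div_lt_iff₀ hhY).mp hrh4
                linarith only [h4Y, hhY]
              apply hcovfinish h hhI ?_ hhnormsq
              intro p hp
              have hp0 : p ≠ 0 := by
                rintro rfl
                rw [zero_smul] at hp
                exact hhne hp
              have hp1 : (1:ℝ) ≤ (p:ℝ)^2 := by
                have h1 : (1:ℝ) ≤ |(p:ℝ)| := by
                  rw [← Int.cast_abs]
                  exact_mod_cast Int.one_le_abs hp0
                linarith only [mul_le_mul h1 h1 (by norm_num : (0:ℝ) ≤ 1) (abs_nonneg (p:ℝ)),
                  sq_abs (p:ℝ)]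
              have hσ2h : σ₂ h = (p:ℝ)*a2 := by
                rw [hp, zsmul_eq_mul, map_mul, map_intCast, ← ha2]
              have hcontr : 1/C^2 < (σ₂ h)^2 := by
                rw [hσ2h, mul_pow]
                linarith only [mul_le_mul_of_nonneg_right hp1 (sq_nonneg a2), ha2big]
              have hh2' : (σ₂ h)^2 < 1/C^2 := by
                have := aux_mul_lt_one C ((σ₂ h)^2) hC0 hh2
                exact hh2
              linarith
          · rw [Bmax, if_neg hne2] at hBeq
            have h2s : (2:ℝ) ≤ 2*Real.sqrt C := by
              linarith [aux_one_le_sqrt C hC]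
            have hrg1 : 1 < rg := by
              apply aux_quart_lt (by norm_num) hrgpos.le
              rw [Real.one_rpow, ← hBg, hBeq]
              linarith only [h2s]
            have h6 : C^2*(G1^2+G2^2) ≤ 6 :=
              aux_ratio6_k1 C G1 G2 (by linarith) (by linarith) (by rw [← hrgdef]; linarith)
            exact aux_caseB_six C (s₁:ℝ) mu L2 Bsq G1 G2 hC0 hL2lo hidg hBsq0 h6
        · -- B(g) = Bmin : compare with b₁
          have hne1 : (setG1 F σ₁ σ₂ C I).Nonempty := ⟨b₁, hb₁G1⟩
          rw [Bmin, if_pos hne1] at hBeq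
          have hbddA : BddAbove (Bfun σ₁ σ₂ C '' setG1 F σ₁ σ₂ C I) := by
            by_contra hnb
            rw [Real.sSup_of_not_bddAbove hnb] at hBeq
            have hpos : (0:ℝ) < Bfun σ₁ σ₂ C (s₁ • b₁ + b₂) := by
              rw [hBg]
              exact Real.rpow_pos_of_pos hrgpos _
            rw [hBeq] at hpos
            exact lt_irrefl _ hpos
          have hge : Bfun σ₁ σ₂ C b₁ ≤ Bfun σ₁ σ₂ C (s₁ • b₁ + b₂) := by
            rw [hBeq]
            exact le_csSup hbddA (Set.mem_image_of_mem _ hb₁G1)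
          have hrge : (1-C^2*a1^2)/(C^2*a2^2-1) ≤ rg :=
            aux_quart_le (le_of_lt (div_pos hrbz1 hrbz2)) hrgpos.le
              (by rw [← hBg, ← hBb]; exact hge)
          have h6 : C^2*(G1^2+G2^2) ≤ 6 :=
            aux_ratio6_k1 C G1 G2 (by linarith) (by linarith) (by rw [← hrgdef]; linarith)
          exact aux_caseB_six C (s₁:ℝ) mu L2 Bsq G1 G2 hC0 hL2lo hidg hBsq0 h6
      exact hfinal hfin
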